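/- Upper bound direction of the 3-approximation for periodic strings: with P, Q of length p, X = P^∞[0..n), Y = Q^∞[0..n), d = ⌊n/p⌋, r = n mod p, for every integer s one has ED(X, Y) ≤ d · ED(P, Q^{↻s}) + 2|s| + ED(P[0..r), Q[0..r)). -/

import Mathlib

/-- Costs for edit operations (formerly `Levenshtein.Cost` in Mathlib). -/
structure Levenshtein.Cost (α β δ : Type*) where
  delete : α → δ
  insert : β → δ
  substitute : α → β → δ

/-- The default unit costs (formerly `Levenshtein.defaultCost` in Mathlib). -/
def Levenshtein.defaultCost {α : Type*} [DecidableEq α] : Levenshtein.Cost α α ℕ where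
  delete _ := 1
  insert _ := 1
  substitute a b := if a = b then 0 else 1

/-- Levenshtein distance (formerly `levenshtein` in Mathlib), by its defining recursion. -/
def levenshtein {α β δ : Type*} [Zero δ] [Add δ] [Min δ] (C : Levenshtein.Cost α β δ) :
    List α → List β → δ
  | [], [] => 0
  | [], y :: ys => C.insert y + levenshtein C [] ys
  | x :: xs, [] => C.delete x + levenshtein C xs []
  | x :: xs, y :: ys =>
    min (C.delete x + levenshtein C xs (y :: ys))
      (min (C.insert y + levenshtein C (x :: xs) ys) (C.substitute x y + levenshtein C xs ys))

/-- Levenshtein edit distance between two lists (unit costs). -/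
def ED {α : Type*} [DecidableEq α] (X Y : List α) : ℕ :=
  levenshtein Levenshtein.defaultCost X Y

/-- The length-`n` prefix `P^∞[0..n)` of the infinite repetition of `P`. -/
def prefRep {α : Type*} (P : List α) (n : ℕ) : List α :=
  ((List.replicate n P).flatten).take n

/-- Cyclic rotation of `Q` by an integer `s` (taken modulo `|Q|`). -/
def rotZ {α : Type*} (Q : List α) (s : ℤ) : List α :=
  Q.rotate (s % (Q.length : ℤ)).toNat

/-!
Split `X = P^d ++ P[0..r)` and `Y = Q^d ++ Q[0..r)`. Subadditivity separates the remainders, and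
the triangle inequality through `R^d`, `R = Q^{↻s}`, leaves `ED(P^d, R^d) ≤ d · ED(P, R)` and
`ED(R^d, Q^d)`. Rotation commutes with taking powers, so `R^d` is `Q^d` rotated by `s`, and a
rotation by `s` costs at most `2|s|`: delete `|s|` symbols at one end and insert them at the other.
Edit distances are compared through alignments, which can be composed and concatenated.
-/

section

variable {α : Type*}

/-- `Aligned x y n`: `x` and `y` have an alignment of cost at most `n`. -/
inductive Aligned : List α → List α → ℕ → Prop
  | nil : Aligned [] [] 0
  | keep (a : α) {x y : List α} {n : ℕ} : Aligned x y n → Aligned (a :: x) (a :: y) n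
  | subst (a b : α) {x y : List α} {n : ℕ} : Aligned x y n → Aligned (a :: x) (b :: y) (n + 1)
  | del (a : α) {x y : List α} {n : ℕ} : Aligned x y n → Aligned (a :: x) y (n + 1)
  | ins (b : α) {x y : List α} {n : ℕ} : Aligned x y n → Aligned x (b :: y) (n + 1)
  | pad {x y : List α} {n : ℕ} : Aligned x y n → Aligned x y (n + 1)

namespace Aligned

theorem mono {x y : List α} {m n : ℕ} (h : Aligned x y m) (hmn : m ≤ n) : Aligned x y n := by
  induction n, hmn using Nat.le_induction with
  | base => exact h
  | succ n _ ih => exact ih.pad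

theorem refl : ∀ x : List α, Aligned x x 0
  | [] => nil
  | a :: x => keep a (refl x)

theorem nil_left : ∀ y : List α, Aligned [] y y.length
  | [] => nil
  | b :: y => ins b (nil_left y)

theorem nil_right : ∀ x : List α, Aligned x [] x.length
  | [] => nil
  | a :: x => del a (nil_right x)

theorem append {x₁ y₁ x₂ y₂ : List α} {m n : ℕ} (h₁ : Aligned x₁ y₁ m) (h₂ : Aligned x₂ y₂ n) :
    Aligned (x₁ ++ x₂) (y₁ ++ y₂) (m + n) := by
  induction h₁ with
  | nil => simpa using h₂
  | keep a _ ih => exact ih.keep a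
  | subst a b _ ih => exact (ih.subst a b).mono (by omega)
  | del a _ ih => exact (ih.del a).mono (by omega)
  | ins b _ ih => exact (ih.ins b).mono (by omega)
  | pad _ ih => exact ih.pad.mono (by omega)

theorem symm {x y : List α} {n : ℕ} (h : Aligned x y n) : Aligned y x n := by
  induction h with
  | nil => exact nil
  | keep a _ ih => exact ih.keep a
  | subst a b _ ih => exact ih.subst b a
  | del a _ ih => exact ih.ins a
  | ins b _ ih => exact ih.del b
  | pad _ ih => exact ih.pad

theorem trans {x y z : List α} {m n : ℕ} (h₁ : Aligned x y m) (h₂ : Aligned y z n) :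
    Aligned x z (m + n) :=
  match h₁, h₂ with
  | nil, h₂ => h₂.mono (by omega)
  | del a h₁, h₂ => ((h₁.trans h₂).del a).mono (by omega)
  | pad h₁, h₂ => (h₁.trans h₂).mono (by omega)
  | h₁, ins c h₂ => ((h₁.trans h₂).ins c).mono (by omega)
  | h₁, pad h₂ => (h₁.trans h₂).mono (by omega)
  | keep a h₁, keep _ h₂ => (h₁.trans h₂).keep a
  | keep a h₁, subst _ c h₂ => ((h₁.trans h₂).subst a c).mono (by omega)
  | keep a h₁, del _ h₂ => ((h₁.trans h₂).del a).mono (by omega)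
  | subst a _ h₁, keep _ h₂ => ((h₁.trans h₂).subst a _).mono (by omega)
  | subst a _ h₁, subst _ c h₂ => ((h₁.trans h₂).subst a c).mono (by omega)
  | subst a _ h₁, del _ h₂ => ((h₁.trans h₂).del a).mono (by omega)
  | ins _ h₁, keep b h₂ => ((h₁.trans h₂).ins b).mono (by omega)
  | ins _ h₁, subst _ c h₂ => ((h₁.trans h₂).ins c).mono (by omega)
  | ins _ h₁, del _ h₂ => (h₁.trans h₂).mono (by omega)
termination_by x.length + y.length + z.length + m + n

theorem min {x y : List α} {m n : ℕ} (hm : Aligned x y m) (hn : Aligned x y n) :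
    Aligned x y (min m n) := by
  rcases le_total m n with h | h
  · rwa [min_eq_left h]
  · rwa [min_eq_right h]

end Aligned

section EditDistance

variable [DecidableEq α]

@[simp] theorem ED_nil_nil : ED ([] : List α) [] = 0 := by simp [ED, levenshtein]

@[simp] theorem ED_nil_cons (b : α) (y : List α) : ED [] (b :: y) = ED [] y + 1 := by
  simp [ED, levenshtein, Levenshtein.defaultCost, add_comm]

@[simp] theorem ED_cons_nil (a : α) (x : List α) : ED (a :: x) [] = ED x [] + 1 := by
  simp [ED, levenshtein, Levenshtein.defaultCost, add_comm]

theorem ED_cons_cons (a b : α) (x y : List α) :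
    ED (a :: x) (b :: y) =
      min (ED x (b :: y) + 1) (min (ED (a :: x) y + 1) (ED x y + if a = b then 0 else 1)) := by
  simp [ED, levenshtein, Levenshtein.defaultCost, add_comm]

theorem ED_cons_left_le (a : α) (x y : List α) : ED (a :: x) y ≤ ED x y + 1 := by
  cases y with
  | nil => simp
  | cons b y => simp [ED_cons_cons]

theorem ED_cons_right_le (b : α) (x y : List α) : ED x (b :: y) ≤ ED x y + 1 := by
  cases x with
  | nil => simp
  | cons a x => simp [ED_cons_cons]

theorem ED_cons_cons_le (a b : α) (x y : List α) :
    ED (a :: x) (b :: y) ≤ ED x y + if a = b then 0 else 1 := by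
  simp [ED_cons_cons]

theorem Aligned.ED_le {x y : List α} {n : ℕ} (h : Aligned x y n) : ED x y ≤ n := by
  induction h with
  | nil => simp
  | keep a _ ih => exact (ED_cons_cons_le a a _ _).trans (by simpa using ih)
  | subst a b _ ih => exact (ED_cons_cons_le a b _ _).trans (by split <;> omega)
  | del a _ ih => exact (ED_cons_left_le a _ _).trans (by omega)
  | ins b _ ih => exact (ED_cons_right_le b _ _).trans (by omega)
  | pad _ ih => omega

theorem aligned_ED : ∀ x y : List α, Aligned x y (ED x y)
  | [], [] => by simpa using .nil
  | [], b :: y => by simpa using (aligned_ED [] y).ins b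
  | a :: x, [] => by simpa using (aligned_ED x []).del a
  | a :: x, b :: y => by
    have hsubst : Aligned (a :: x) (b :: y) (ED x y + if a = b then 0 else 1) := by
      split_ifs with hab
      · exact hab ▸ (aligned_ED x y).keep a
      · exact (aligned_ED x y).subst a b
    rw [ED_cons_cons]
    exact ((aligned_ED x (b :: y)).del a).min (((aligned_ED (a :: x) y).ins b).min hsubst)

theorem ED_comm (x y : List α) : ED x y = ED y x :=
  le_antisymm (aligned_ED y x).symm.ED_le (aligned_ED x y).symm.ED_le

theorem ED_triangle (x y z : List α) : ED x z ≤ ED x y + ED y z :=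
  ((aligned_ED x y).trans (aligned_ED y z)).ED_le

theorem ED_append_le (x₁ x₂ y₁ y₂ : List α) :
    ED (x₁ ++ x₂) (y₁ ++ y₂) ≤ ED x₁ y₁ + ED x₂ y₂ :=
  ((aligned_ED x₁ y₁).append (aligned_ED x₂ y₂)).ED_le

theorem ED_flatten_replicate_le (x y : List α) (d : ℕ) :
    ED (List.replicate d x).flatten (List.replicate d y).flatten ≤ d * ED x y := by
  induction d with
  | zero => simp
  | succ d ih =>
    simp only [List.replicate_succ, List.flatten_cons]
    grw [ED_append_le, ih]
    rw [Nat.succ_mul, add_comm]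

theorem ED_append_swap_le (u w : List α) : ED (u ++ w) (w ++ u) ≤ 2 * u.length := by
  have h := (Aligned.nil_right u).append ((Aligned.refl w).append (Aligned.nil_left u))
  simp only [List.nil_append, List.append_nil] at h
  simpa [two_mul] using h.ED_le

theorem ED_rotate_le (l : List α) (k : ℕ) : ED l (l.rotate k) ≤ 2 * k := by
  set m := k % l.length
  calc ED l (l.rotate k) = ED (l.take m ++ l.drop m) (l.drop m ++ l.take m) := by
        rw [List.rotate_eq_drop_append_take_mod, List.take_append_drop]
    _ ≤ 2 * (l.take m).length := ED_append_swap_le _ _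
    _ ≤ 2 * k := by grw [List.length_take_le]; exact Nat.mul_le_mul_left 2 (Nat.mod_le k _)

end EditDistance

namespace List

theorem length_flatten_replicate (l : List α) (d : ℕ) :
    (replicate d l).flatten.length = d * l.length := by
  simp [length_flatten]

theorem take_flatten_replicate_of_le {l : List α} {n m k : ℕ} (hn : n ≤ m * l.length)
    (hmk : m ≤ k) : (replicate k l).flatten.take n = (replicate m l).flatten.take n := by
  obtain ⟨c, rfl⟩ := Nat.exists_eq_add_of_le hmk
  rw [replicate_add, flatten_append, take_append_of_le_length (by rwa [length_flatten_replicate])]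

theorem flatten_replicate_append_succ (u w : List α) (d : ℕ) :
    (replicate (d + 1) (u ++ w)).flatten = u ++ (replicate d (w ++ u)).flatten ++ w := by
  induction d with
  | zero => simp
  | succ d ih => rw [replicate_succ, flatten_cons, ih, replicate_succ, flatten_cons]; simp

theorem flatten_replicate_rotate_one (l : List α) (d : ℕ) :
    (replicate d l).flatten.rotate 1 = (replicate d (l.rotate 1)).flatten := by
  match l, d with
  | [], _ => simp
  | _, 0 => simp
  | a :: t, d + 1 =>
    rw [replicate_succ, flatten_cons, cons_append, rotate_cons_succ, rotate_zero,
      rotate_cons_succ, rotate_zero, flatten_replicate_append_succ]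
    simp

theorem flatten_replicate_rotate (l : List α) (d k : ℕ) :
    (replicate d l).flatten.rotate k = (replicate d (l.rotate k)).flatten := by
  induction k with
  | zero => simp
  | succ k ih => rw [← rotate_rotate, ih, flatten_replicate_rotate_one, rotate_rotate]

end List

theorem prefRep_eq (P : List α) (n : ℕ) :
    prefRep P n = (List.replicate (n / P.length) P).flatten ++ P.take (n % P.length) := by
  obtain rfl | hP := eq_or_ne P []
  · simp [prefRep]
  set p := P.length
  have hp : 0 < p := List.length_pos_iff.mpr hP
  have hdiv := Nat.div_add_mod' n p
  have hmod := Nat.mod_lt n hp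
  have hlen : (List.replicate (n / p) P).flatten.length = n / p * p :=
    List.length_flatten_replicate P _
  have hone_more : prefRep P n = (List.replicate (n / p + 1) P).flatten.take n := by
    rcases le_total n (n / p + 1) with h | h
    · rw [prefRep, List.take_flatten_replicate_of_le (Nat.le_mul_of_pos_right n hp) h]
    · have hn : n ≤ (n / p + 1) * p := by rw [Nat.succ_mul]; omega
      exact List.take_flatten_replicate_of_le hn h
  rw [hone_more, List.replicate_succ', List.flatten_append, List.flatten_singleton,
    List.take_append, List.take_of_length_le (by rw [hlen]; omega), hlen]
  congr 2
  omega

theorem rotZ_eq_rotate_of_modEq {l : List α} {s : ℤ} {k : ℕ} (h : (k : ℤ) ≡ s [ZMOD l.length]) :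
    rotZ l s = l.rotate k := by
  have hmod : ((k % l.length : ℕ) : ℤ) = s % l.length := by push_cast; exact h
  rw [rotZ, ← hmod, Int.toNat_natCast, List.rotate_mod]

theorem flatten_replicate_rotZ (l : List α) (d : ℕ) (s : ℤ) :
    (List.replicate d (rotZ l s)).flatten = rotZ (List.replicate d l).flatten s := by
  rcases Nat.eq_zero_or_pos d with rfl | hd
  · simp [rotZ]
  obtain rfl | hl := eq_or_ne l []
  · simp [rotZ]
  have hpos : (0 : ℤ) < d * l.length := by
    exact_mod_cast Nat.mul_pos hd (List.length_pos_iff.mpr hl)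
  conv_rhs => rw [rotZ, List.flatten_replicate_rotate]
  congr 2
  apply rotZ_eq_rotate_of_modEq
  rw [List.length_flatten_replicate, Nat.cast_mul, Int.toNat_of_nonneg (Int.emod_nonneg _ hpos.ne')]
  exact (Int.mod_modEq _ _).of_mul_left _

theorem ED_rotZ_le [DecidableEq α] (l : List α) (s : ℤ) : ED (rotZ l s) l ≤ 2 * s.natAbs := by
  obtain rfl | hl := eq_or_ne l []
  · simp [rotZ]
  have hpos : (0 : ℤ) < l.length := by exact_mod_cast List.length_pos_iff.mpr hl
  rcases le_or_gt 0 s with hs | hs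
  · rw [rotZ_eq_rotate_of_modEq (k := s.toNat) (by rw [Int.toNat_of_nonneg hs]), ED_comm]
    grw [ED_rotate_le]
    omega
  · have hinv : (rotZ l s).rotate s.natAbs = l := by
      rw [rotZ, List.rotate_rotate, ← rotZ_eq_rotate_of_modEq (s := 0)]
      · simp [rotZ]
      · push_cast
        rw [Int.toNat_of_nonneg (Int.emod_nonneg _ hpos.ne'), abs_of_neg hs]
        simpa using (Int.mod_modEq s l.length).add_right (-s)
    calc ED (rotZ l s) l = ED (rotZ l s) ((rotZ l s).rotate s.natAbs) := by rw [hinv]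
      _ ≤ 2 * s.natAbs := ED_rotate_le _ _

end

theorem ed_periodic_upper_general {α : Type*} [DecidableEq α] (P Q : List α) (p : ℕ)
    (hP : P.length = p) (hQ : Q.length = p) (n : ℕ) (s : ℤ) :
    ED (prefRep P n) (prefRep Q n) ≤
      (n / p) * ED P (rotZ Q s) + 2 * s.natAbs + ED (P.take (n % p)) (Q.take (n % p)) := by
  rw [prefRep_eq, prefRep_eq, hP, hQ]
  let Pd := (List.replicate (n / p) P).flatten
  let Qd := (List.replicate (n / p) Q).flatten
  let Rd := (List.replicate (n / p) (rotZ Q s)).flatten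
  have hrot : ED Rd Qd ≤ 2 * s.natAbs := by
    rw [show Rd = rotZ Qd s from flatten_replicate_rotZ Q (n / p) s]
    exact ED_rotZ_le Qd s
  calc ED (Pd ++ P.take (n % p)) (Qd ++ Q.take (n % p))
      ≤ ED Pd Qd + ED (P.take (n % p)) (Q.take (n % p)) := ED_append_le _ _ _ _
    _ ≤ ED Pd Rd + ED Rd Qd + ED (P.take (n % p)) (Q.take (n % p)) := by grw [ED_triangle _ Rd]
    _ ≤ _ := by grw [ED_flatten_replicate_le, hrot]

/-- Upper bound direction of the 3-approximation for periodic strings: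
with `|P| = |Q| = p > 0`, `X = P^∞[0..n)`, `Y = Q^∞[0..n)`, `d = ⌊n/p⌋`, `r = n mod p`,
for every integer `s`, `ED(X,Y) ≤ d·ED(P, Q^{↻s}) + 2|s| + ED(P[0..r), Q[0..r))`. -/
theorem ed_periodic_upper {α : Type*} [DecidableEq α] (P Q : List α) (p : ℕ) (hp : 0 < p)
    (hP : P.length = p) (hQ : Q.length = p) (n : ℕ) (hn : 0 < n) (s : ℤ) :
    ED (prefRep P n) (prefRep Q n) ≤
      (n / p) * ED P (rotZ Q s) + 2 * s.natAbs + ED (P.take (n % p)) (Q.take (n % p)) :=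
  ed_periodic_upper_general P Q p hP hQ n s
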